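/- arXiv:2406.13298 — 10 statements merged into one kernel-verified Lean document; each statement's English description precedes it below -/
import Mathlib

section
/- If f is analytic on the open unit disk D with f(0)=0, f'(0)=1, and |z f'(z) - f(z)| < 1/2 for all z in D, then the Taylor coefficients a_k of f at 0 satisfy |a_k| ≤ 1/(2(k-1)) for all k ≥ 2. -/
/-!
Put `g z = z f'(z) - f z`. Differentiating the power series of `f` termwise gives
`g z = ∑ (k - 1) a_k z^k` on the unit disc, and `‖g‖ < 1/2` there, so Cauchy's estimate on circles
of radius `ρ < 1`, followed by `ρ → 1`, yields `(k - 1) ‖a_k‖ ≤ 1/2`.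
-/

open Metric Complex

open FormalMultilinearSeries NNReal ENNReal Filter Set Topology Real

theorem hasFPowerSeriesOnBall_ofScalars_of_hasSum {f : ℂ → ℂ} {c : ℕ → ℂ} {r : ℝ≥0}
    (hr : 0 < r) (hc : ∀ z ∈ ball (0 : ℂ) r, HasSum (fun n => c n * z ^ n) (f z)) :
    HasFPowerSeriesOnBall f (ofScalars ℂ c) 0 r := by
  refine ⟨ENNReal.le_of_forall_nnreal_lt fun ρ hρ => ?_, mod_cast hr, fun {z} hz => ?_⟩
  · apply le_radius_of_summable
    have hρr : (ρ : ℂ) ∈ ball (0 : ℂ) r := by simpa using hρ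
    simpa [ofScalars_norm] using (hc _ hρr).summable.norm
  · rw [eball_coe] at hz
    simpa [ofScalars_apply_eq, mul_comm] using hc z hz

section

variable {𝕜 : Type*} [NontriviallyNormedField 𝕜] [CompleteSpace 𝕜] {f : 𝕜 → 𝕜} {c : ℕ → 𝕜}
  {r : ℝ≥0∞}

theorem HasFPowerSeriesOnBall.deriv_ofScalars {x : 𝕜}
    (hf : HasFPowerSeriesOnBall f (ofScalars 𝕜 c) x r) :
    HasFPowerSeriesOnBall (deriv f) (ofScalars 𝕜 fun n => (n + 1) * c (n + 1)) x r := by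
  convert (ContinuousLinearMap.apply 𝕜 𝕜 (1 : 𝕜)).comp_hasFPowerSeriesOnBall hf.fderiv
  · ext z; simp
  · ext n
    simp [ofScalars]

theorem HasFPowerSeriesOnBall.hasSum_mul_deriv (hf : HasFPowerSeriesOnBall f (ofScalars 𝕜 c) 0 r)
    {z : 𝕜} (hz : z ∈ eball 0 r) :
    HasSum (fun n => n * c n * z ^ n) (z * deriv f z) := by
  have hderiv := (hf.deriv_ofScalars.hasSum hz).mul_left z
  simp only [ofScalars_apply_eq, smul_eq_mul, zero_add] at hderiv
  rw [← hasSum_nat_add_iff' 1]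
  simpa [pow_succ, mul_comm, mul_left_comm, mul_assoc] using hderiv

end

section

variable {E : Type*} [NormedAddCommGroup E] [NormedSpace ℂ E]

theorem norm_cauchyPowerSeries_mul_pow_le {f : ℂ → E} {x : ℂ} {R M : ℝ} (hR : 0 < R)
    (hM : ∀ z ∈ sphere x R, ‖f z‖ ≤ M) (n : ℕ) : ‖cauchyPowerSeries f x R n‖ * R ^ n ≤ M := by
  have hmean : ∫ θ in 0..2 * π, ‖f (circleMap x R θ)‖ ≤ 2 * π * M := by
    have h := intervalIntegral.norm_integral_le_of_norm_le_const (a := 0) (b := 2 * π)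
      fun θ _ => (norm_norm (f (circleMap x R θ))).trans_le (hM _ (circleMap_mem_sphere x hR.le θ))
    simpa [abs_of_pos pi_pos, mul_comm] using (le_abs_self _).trans h
  have hRn : 0 < R ^ n := pow_pos hR n
  calc ‖cauchyPowerSeries f x R n‖ * R ^ n
      ≤ (2 * π)⁻¹ * (∫ θ in 0..2 * π, ‖f (circleMap x R θ)‖) * |R|⁻¹ ^ n * R ^ n := by
        gcongr
        exact norm_cauchyPowerSeries_le f x R n
    _ ≤ M := by
        rw [abs_of_pos hR, mul_assoc, inv_pow, inv_mul_cancel₀ hRn.ne', mul_one,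
          inv_mul_le_iff₀ two_pi_pos]
        exact hmean

theorem HasFPowerSeriesOnBall.norm_coeff_mul_pow_le [CompleteSpace E] {f : ℂ → E}
    {p : FormalMultilinearSeries ℂ ℂ E} {x : ℂ} {r : ℝ≥0} {M : ℝ}
    (hf : HasFPowerSeriesOnBall f p x r) (hM : ∀ z ∈ ball x r, ‖f z‖ ≤ M) (n : ℕ) :
    ‖p n‖ * r ^ n ≤ M := by
  have hρ : ∀ ρ ∈ Ioo (0 : ℝ) r, ‖p n‖ * ρ ^ n ≤ M := by
    rintro ρ ⟨hρ0, hρr⟩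
    lift ρ to ℝ≥0 using hρ0.le
    have hcauchy : HasFPowerSeriesOnBall f (cauchyPowerSeries f x ρ) x ρ := by
      refine DifferentiableOn.hasFPowerSeriesOnBall ?_ (mod_cast hρ0)
      refine hf.differentiableOn.mono ?_
      rw [eball_coe]
      exact closedBall_subset_ball hρr
    rw [hf.hasFPowerSeriesAt.eq_formalMultilinearSeries hcauchy.hasFPowerSeriesAt]
    exact norm_cauchyPowerSeries_mul_pow_le hρ0
      (fun z hz => hM z (sphere_subset_closedBall.trans (closedBall_subset_ball hρr) hz)) n
  have hr : (0 : ℝ) < r := mod_cast ENNReal.coe_pos.mp hf.r_pos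
  have hlim : Tendsto (fun ρ : ℝ => ‖p n‖ * ρ ^ n) (𝓝[<] (r : ℝ)) (𝓝 (‖p n‖ * r ^ n)) :=
    ((continuous_const.mul (continuous_pow n)).tendsto _).mono_left nhdsWithin_le_nhds
  exact le_of_tendsto hlim (eventually_of_mem (Ioo_mem_nhdsLT hr) hρ)

end

theorem stmt_0_general (f : ℂ → ℂ) (a : ℕ → ℂ)
    (ha : ∀ z ∈ ball (0:ℂ) 1, HasSum (fun k : ℕ => a k * z ^ k) (f z))
    (hΩ : ∀ z ∈ ball (0:ℂ) 1, ‖z * deriv f z - f z‖ < 1/2) :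
    ∀ k : ℕ, 2 ≤ k → ‖a k‖ ≤ 1 / (2 * ((k : ℝ) - 1)) := by
  intro k hk
  have hf := hasFPowerSeriesOnBall_ofScalars_of_hasSum one_pos (by simpa using ha)
  have hg : HasFPowerSeriesOnBall (fun z => z * deriv f z - f z)
      (ofScalars ℂ fun n => ((n : ℂ) - 1) * a n) 0 1 := by
    refine hasFPowerSeriesOnBall_ofScalars_of_hasSum one_pos fun z hz => ?_
    refine ((hf.hasSum_mul_deriv (by rwa [eball_coe])).sub (ha z (by simpa using hz))).congr_fun
      fun n => ?_
    ring
  have hbound := hg.norm_coeff_mul_pow_le (M := 1 / 2) (fun z hz => (hΩ z (by simpa using hz)).le) k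
  have hk1 : (1 : ℝ) < k := by exact_mod_cast hk
  have hnorm : ‖(k : ℂ) - 1‖ = k - 1 := by
    rw [← Nat.cast_pred (by omega), Complex.norm_natCast, Nat.cast_pred (by omega)]
  rw [ofScalars_norm, NNReal.coe_one, one_pow, mul_one, norm_mul, hnorm] at hbound
  rw [le_div_iff₀ (by linarith)]
  linarith

theorem stmt_0 (f : ℂ → ℂ) (a : ℕ → ℂ)
    (hf : DifferentiableOn ℂ f (ball (0:ℂ) 1))
    (ha : ∀ z ∈ ball (0:ℂ) 1, HasSum (fun k : ℕ => a k * z ^ k) (f z))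
    (ha0 : a 0 = 0) (ha1 : a 1 = 1)
    (hΩ : ∀ z ∈ ball (0:ℂ) 1, ‖z * deriv f z - f z‖ < 1/2) :
    ∀ k : ℕ, 2 ≤ k → ‖a k‖ ≤ 1 / (2 * ((k : ℝ) - 1)) :=
  stmt_0_general f a ha hΩ
end

section
/- If f is analytic on the open unit disk with f(0)=0, f'(0)=1, and |z f'(z) - f(z)| < 1/2 for all z in the disk, then |z| - |z|²/2 ≤ |f(z)| ≤ |z| + |z|²/2 for all z in the disk. -/
/-! The function `u z = z * f' z - f z` is bounded by `C` on the ball of radius `R` and vanishes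
to second order at `0` (as `u' z = z * f'' z`), so the Schwarz lemma applied twice gives
`‖u z‖ ≤ C / R ^ 2 * ‖z‖ ^ 2`. Since `(f z / z)' = u z / z ^ 2`, the function `f z / z`
(that is, `dslope f 0`) is `C / R ^ 2`-Lipschitz, whence `‖f z - f' 0 * z‖ ≤ C / R ^ 2 * ‖z‖ ^ 2`.
With `R = 1`, `C = 1 / 2` and `f' 0 = 1` both bounds follow from the triangle inequality. -/

open Metric Complex Set Filter Topology

theorem Complex.norm_le_div_sq_mul_sq_of_mapsTo_ball {E : Type*} [NormedAddCommGroup E]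
    [NormedSpace ℂ E] [CompleteSpace E] {f : ℂ → E} {c z : ℂ} {R₁ R₂ : ℝ}
    (hd : DifferentiableOn ℂ f (ball c R₁)) (hfc : f c = 0) (hf'c : deriv f c = 0)
    (h_maps : MapsTo f (ball c R₁) (closedBall 0 R₂)) (hz : z ∈ ball c R₁) :
    ‖f z‖ ≤ R₂ / R₁ ^ 2 * ‖z - c‖ ^ 2 := by
  have hR₁ : 0 < R₁ := pos_of_mem_ball hz
  set g := dslope f c
  have hg : DifferentiableOn ℂ g (ball c R₁) :=
    (differentiableOn_dslope (ball_mem_nhds c hR₁)).2 hd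
  have hgc : g c = 0 := (dslope_same f c).trans hf'c
  have hg_maps : MapsTo g (ball c R₁) (closedBall (g c) (R₂ / R₁)) := fun w hw => by
    rw [hgc, mem_closedBall_zero_iff]
    exact norm_dslope_le_div_of_mapsTo_ball hd (by rwa [hfc]) hw
  have hgz := dist_le_div_mul_dist_of_mapsTo_ball hg hg_maps hz
  rw [hgc, dist_zero_right, dist_eq_norm] at hgz
  calc ‖f z‖ = ‖z - c‖ * ‖g z‖ := by rw [← norm_smul, sub_smul_dslope, hfc, sub_zero]
    _ ≤ ‖z - c‖ * (R₂ / R₁ / R₁ * ‖z - c‖) := by gcongr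
    _ = R₂ / R₁ ^ 2 * ‖z - c‖ ^ 2 := by ring

theorem HasDerivAt.dslope_of_ne {𝕜 E : Type*} [NontriviallyNormedField 𝕜] [NormedAddCommGroup E]
    [NormedSpace 𝕜 E] {f : 𝕜 → E} {f' : E} {a b : 𝕜} (hf : HasDerivAt f f' b) (hb : b ≠ a) :
    HasDerivAt (dslope f a) (((b - a) ^ 2)⁻¹ • ((b - a) • f' - (f b - f a))) b := by
  have hba : b - a ≠ 0 := sub_ne_zero.2 hb
  have hslope : HasDerivAt (fun x => (x - a)⁻¹ • (f x - f a))
      ((b - a)⁻¹ • f' + (-1 / (b - a) ^ 2) • (f b - f a)) b :=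
    (((hasDerivAt_id b).sub_const a).fun_inv hba).smul (hf.sub_const (f a))
  refine (hslope.congr_of_eventuallyEq ?_).congr_deriv ?_
  · filter_upwards [dslope_eventuallyEq_slope_of_ne f hb] with x hx
    rw [hx, slope_def_module]
  · match_scalars <;> field_simp

theorem hasDerivAt_mul_deriv_sub {𝕜 : Type*} [NontriviallyNormedField 𝕜] {f : 𝕜 → 𝕜} {z : 𝕜}
    (hf : DifferentiableAt 𝕜 f z) (hf' : DifferentiableAt 𝕜 (deriv f) z) :
    HasDerivAt (fun w => w * deriv f w - f w) (z * deriv (deriv f) z) z := by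
  exact (((hasDerivAt_id' z).fun_mul hf'.hasDerivAt).fun_sub hf.hasDerivAt).congr_deriv (by ring)

theorem norm_deriv_dslope_le_of_norm_mul_deriv_sub_le {f : ℂ → ℂ} {R C : ℝ} {z : ℂ}
    (hf : DifferentiableOn ℂ f (ball 0 R)) (hf0 : f 0 = 0)
    (hC : ∀ w ∈ ball (0 : ℂ) R, ‖w * deriv f w - f w‖ ≤ C) (hz : z ∈ ball 0 R) :
    ‖deriv (dslope f 0) z‖ ≤ C / R ^ 2 := by
  have hR : 0 < R := pos_of_mem_ball hz
  have hfa : AnalyticOnNhd ℂ f (ball 0 R) := hf.analyticOnNhd isOpen_ball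
  have hu : ∀ w ∈ ball (0 : ℂ) R,
      HasDerivAt (fun w => w * deriv f w - f w) (w * deriv (deriv f) w) w := fun w hw =>
    hasDerivAt_mul_deriv_sub (hfa w hw).differentiableAt (hfa.deriv w hw).differentiableAt
  have hu_sq : ∀ w ∈ ball (0 : ℂ) R, ‖w * deriv f w - f w‖ ≤ C / R ^ 2 * ‖w‖ ^ 2 :=
    fun w hw => by
      simpa using norm_le_div_sq_mul_sq_of_mapsTo_ball
        (fun x hx => (hu x hx).differentiableAt.differentiableWithinAt) (by simp [hf0])
        (by simpa using (hu 0 (mem_ball_self hR)).deriv)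
        (fun x hx => mem_closedBall_zero_iff.2 (hC x hx)) hw
  have h_ne : ∀ w ∈ ball (0 : ℂ) R, w ≠ 0 → ‖deriv (dslope f 0) w‖ ≤ C / R ^ 2 := by
    intro w hw hw0
    rw [((hfa w hw).differentiableAt.hasDerivAt.dslope_of_ne hw0).deriv, hf0, sub_zero,
      sub_zero, norm_smul, norm_inv, norm_pow, smul_eq_mul, inv_mul_le_iff₀ (by positivity)]
    simpa only [mul_comm] using hu_sq w hw
  rcases eq_or_ne z 0 with rfl | hz0
  -- at `0` the quotient formula is unavailable; pass to the limit instead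
  · have hga : AnalyticOnNhd ℂ (dslope f 0) (ball 0 R) :=
      ((differentiableOn_dslope (ball_mem_nhds 0 hR)).2 hf).analyticOnNhd isOpen_ball
    refine le_of_tendsto (x := 𝓝[≠] 0)
      ((hga.deriv 0 hz).continuousAt.norm.mono_left nhdsWithin_le_nhds) ?_
    filter_upwards [nhdsWithin_le_nhds (ball_mem_nhds 0 hR), self_mem_nhdsWithin]
      with w hw hw0 using h_ne w hw hw0
  · exact h_ne z hz hz0

theorem norm_sub_deriv_mul_le_of_norm_mul_deriv_sub_le {f : ℂ → ℂ} {R C : ℝ} {z : ℂ}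
    (hf : DifferentiableOn ℂ f (ball 0 R)) (hf0 : f 0 = 0)
    (hC : ∀ w ∈ ball (0 : ℂ) R, ‖w * deriv f w - f w‖ ≤ C) (hz : z ∈ ball 0 R) :
    ‖f z - deriv f 0 * z‖ ≤ C / R ^ 2 * ‖z‖ ^ 2 := by
  have hR : 0 < R := pos_of_mem_ball hz
  have hg : DifferentiableOn ℂ (dslope f 0) (ball 0 R) :=
    (differentiableOn_dslope (ball_mem_nhds 0 hR)).2 hf
  have hmvt := (convex_ball (0 : ℂ) R).norm_image_sub_le_of_norm_deriv_le
    (fun w hw => hg.differentiableAt (isOpen_ball.mem_nhds hw))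
    (fun w hw => norm_deriv_dslope_le_of_norm_mul_deriv_sub_le hf hf0 hC hw)
    (mem_ball_self hR) hz
  rw [dslope_same, sub_zero] at hmvt
  have hfz : f z = z * dslope f 0 z := by simpa [hf0] using (sub_smul_dslope f 0 z).symm
  calc ‖f z - deriv f 0 * z‖ = ‖z‖ * ‖dslope f 0 z - deriv f 0‖ := by
        rw [hfz, ← norm_mul, mul_sub, mul_comm (deriv f 0)]
    _ ≤ ‖z‖ * (C / R ^ 2 * ‖z‖) := by gcongr
    _ = C / R ^ 2 * ‖z‖ ^ 2 := by ring

theorem stmt_1 (f : ℂ → ℂ)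
    (hf : DifferentiableOn ℂ f (ball (0:ℂ) 1))
    (hf0 : f 0 = 0) (hf1 : deriv f 0 = 1)
    (hΩ : ∀ z ∈ ball (0:ℂ) 1, ‖z * deriv f z - f z‖ < 1/2) :
    ∀ z ∈ ball (0:ℂ) 1,
      ‖z‖ - ‖z‖^2 / 2 ≤ ‖f z‖ ∧ ‖f z‖ ≤ ‖z‖ + ‖z‖^2 / 2 := by
  intro z hz
  have h := norm_sub_deriv_mul_le_of_norm_mul_deriv_sub_le hf hf0 (fun w hw => (hΩ w hw).le) hz
  rw [hf1, one_mul, one_pow, div_one] at h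
  have h_tri := abs_le.1 ((abs_norm_sub_norm_le (f z) z).trans h)
  constructor <;> linarith [h_tri.1, h_tri.2]
end

section
/- If f is analytic on the open unit disk with f(0)=0, f'(0)=1, and |z f'(z) - f(z)| < 1/2 for all z in the disk, then 1 - |z| ≤ |f'(z)| ≤ 1 + |z| for all z in the disk. -/
/-!
Write `f z = z F(z)` with `F = dslope f 0`, so `F 0 = f'(0)` and `z f'(z) - f(z) = z² F'(z)`.
Dividing by `z` twice (Schwarz's lemma, applied twice) turns `|z f' - f| ≤ C` on the disk of
radius `R` into `|F'| ≤ C / R²`. Hence `|F(z) - F(0)| ≤ C|z| / R²` by the mean value inequality,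
and `f'(z) - f'(0) = (F(z) - F(0)) + z F'(z)` is bounded by `2C|z| / R²`.
-/

open Metric Complex Set

namespace Complex

theorem norm_le_div_of_norm_mul_le {φ : ℂ → ℂ} {R C : ℝ}
    (hφ : DifferentiableOn ℂ φ (ball 0 R)) (hC : ∀ z ∈ ball (0 : ℂ) R, ‖z * φ z‖ ≤ C) :
    ∀ z ∈ ball (0 : ℂ) R, ‖φ z‖ ≤ C / R := by
  intro z hz
  have hmaps : MapsTo (fun w => w * φ w) (ball 0 R) (closedBall (0 * φ 0) C) := by
    intro w hw
    simpa using hC w hw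
  have hslope : dslope (fun w => w * φ w) 0 z = φ z := by
    rcases eq_or_ne z 0 with rfl | hz0
    · have hφ0 := hφ.differentiableAt (ball_mem_nhds _ (pos_of_mem_ball hz))
      rw [dslope_same, deriv_fun_mul differentiableAt_fun_id hφ0]
      simp
    · rw [dslope_of_ne _ hz0, slope_def_field]
      field_simp
      ring
  rw [← hslope]
  exact norm_dslope_le_div_of_mapsTo_ball (differentiableOn_id.mul hφ) hmaps hz

variable {f : ℂ → ℂ} {R : ℝ}

theorem eq_mul_dslope_zero (hf0 : f 0 = 0) (w : ℂ) : f w = w * dslope f 0 w := by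
  simpa [hf0] using (sub_smul_dslope f 0 w).symm

theorem deriv_eq_dslope_add_mul_deriv_dslope (hf : DifferentiableOn ℂ f (ball 0 R))
    (hf0 : f 0 = 0) {z : ℂ} (hz : z ∈ ball (0 : ℂ) R) :
    deriv f z = dslope f 0 z + z * deriv (dslope f 0) z := by
  have hmul : f = fun w => w * dslope f 0 w := funext (eq_mul_dslope_zero hf0)
  have hF : DifferentiableAt ℂ (dslope f 0) z :=
    ((differentiableOn_dslope (ball_mem_nhds _ (pos_of_mem_ball hz))).2 hf).differentiableAt
      (isOpen_ball.mem_nhds hz)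
  conv_lhs => rw [hmul]
  rw [deriv_fun_mul differentiableAt_fun_id hF]
  simp

theorem norm_deriv_dslope_le (hf : DifferentiableOn ℂ f (ball 0 R)) (hf0 : f 0 = 0) {C : ℝ}
    (hC : ∀ z ∈ ball (0 : ℂ) R, ‖z * deriv f z - f z‖ ≤ C) :
    ∀ z ∈ ball (0 : ℂ) R, ‖deriv (dslope f 0) z‖ ≤ C / R / R := by
  intro z hz
  have hF : DifferentiableOn ℂ (dslope f 0) (ball 0 R) :=
    (differentiableOn_dslope (ball_mem_nhds _ (pos_of_mem_ball hz))).2 hf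
  have hF' : DifferentiableOn ℂ (deriv (dslope f 0)) (ball 0 R) :=
    (hF.analyticOnNhd isOpen_ball).deriv.differentiableOn
  have hsq : ∀ w ∈ ball (0 : ℂ) R, w * (w * deriv (dslope f 0) w) = w * deriv f w - f w := by
    intro w hw
    rw [deriv_eq_dslope_add_mul_deriv_dslope hf hf0 hw, eq_mul_dslope_zero hf0 w]
    ring
  refine norm_le_div_of_norm_mul_le hF' (norm_le_div_of_norm_mul_le
    (differentiableOn_id.mul hF') fun w hw => ?_) z hz
  rw [hsq w hw]
  exact hC w hw

theorem norm_deriv_sub_deriv_zero_le (hf : DifferentiableOn ℂ f (ball 0 R)) (hf0 : f 0 = 0)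
    {C : ℝ} (hC : ∀ z ∈ ball (0 : ℂ) R, ‖z * deriv f z - f z‖ ≤ C) :
    ∀ z ∈ ball (0 : ℂ) R, ‖deriv f z - deriv f 0‖ ≤ 2 * (C / R / R) * ‖z‖ := by
  intro z hz
  have h0 : (0 : ℂ) ∈ ball (0 : ℂ) R := mem_ball_self (pos_of_mem_ball hz)
  have hF : DifferentiableOn ℂ (dslope f 0) (ball 0 R) :=
    (differentiableOn_dslope (ball_mem_nhds _ (pos_of_mem_ball hz))).2 hf
  have hbound := norm_deriv_dslope_le hf hf0 hC
  have hmvt : ‖dslope f 0 z - dslope f 0 0‖ ≤ C / R / R * ‖z - 0‖ :=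
    (convex_ball 0 R).norm_image_sub_le_of_norm_deriv_le
      (fun w hw => hF.differentiableAt (isOpen_ball.mem_nhds hw)) hbound h0 hz
  have hlin : ‖z * deriv (dslope f 0) z‖ ≤ C / R / R * ‖z‖ := by
    rw [norm_mul, mul_comm]
    exact mul_le_mul_of_nonneg_right (hbound z hz) (norm_nonneg z)
  calc ‖deriv f z - deriv f 0‖
      = ‖(dslope f 0 z - dslope f 0 0) + z * deriv (dslope f 0) z‖ := by
        rw [deriv_eq_dslope_add_mul_deriv_dslope hf hf0 hz, dslope_same]
        ring_nf
    _ ≤ C / R / R * ‖z‖ + C / R / R * ‖z‖ := by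
        refine (norm_add_le _ _).trans (add_le_add ?_ hlin)
        simpa using hmvt
    _ = 2 * (C / R / R) * ‖z‖ := by ring

end Complex

theorem stmt_2 (f : ℂ → ℂ)
    (hf : DifferentiableOn ℂ f (ball (0:ℂ) 1))
    (hf0 : f 0 = 0) (hf1 : deriv f 0 = 1)
    (hΩ : ∀ z ∈ ball (0:ℂ) 1, ‖z * deriv f z - f z‖ < 1/2) :
    ∀ z ∈ ball (0:ℂ) 1,
      1 - ‖z‖ ≤ ‖deriv f z‖ ∧ ‖deriv f z‖ ≤ 1 + ‖z‖ := by
  intro z hz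
  have hdist : ‖deriv f z - 1‖ ≤ ‖z‖ := by
    simpa [hf1] using
      Complex.norm_deriv_sub_deriv_zero_le hf hf0 (fun w hw => (hΩ w hw).le) z hz
  constructor
  · linarith [norm_sub_norm_le (1 : ℂ) (deriv f z), norm_sub_rev (1 : ℂ) (deriv f z),
      norm_one (α := ℂ)]
  · linarith [norm_sub_norm_le (deriv f z) 1, norm_one (α := ℂ)]
end

section
/- Let f(z) = z + Σ_{k≥2} a_k z^k ∈ Ω and for n ≥ 2 let ρ_n(z) = Σ_{k≥n+1} a_k z^k. Then for |z| = r < 1, |ρ_n'(z)| ≤ (2r² - r)/(2(1-r)) - ln(1-r)/2. -/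
/-!
The Taylor coefficients of `z f' - f` are `(k - 1) a_k`, so Cauchy's estimate on the circles
`|z| = r < 1`, with `r → 1`, turns `|z f' - f| < 1/2` into `(k - 1) |a_k| ≤ 1/2`. Differentiating
the tail termwise, `|ρ_n'(z)| ≤ ∑_{j ≥ n} (j + 1) / (2 j) r^j ≤ ∑_{j ≥ 2} (j + 1) / (2 j) r^j`
because `(j + 1) / (2 j) r^j` decreases in `j`, and the last series is
`r² / (2 (1 - r)) + (-log (1 - r) - r) / 2`.
-/

open Metric Complex Filter Function Set Topology

section PowerSeriesOnUnitDisc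

variable {c : ℕ → ℂ}

theorem summable_norm_mul_nat_mul_pow_sub_one
    (hc : ∀ w ∈ ball (0 : ℂ) 1, Summable fun k => c k * w ^ k) {r : ℝ} (hr0 : 0 ≤ r)
    (hr1 : r < 1) : Summable fun k : ℕ => ‖c k‖ * (k * r ^ (k - 1)) := by
  obtain ⟨ρ, hrρ, hρ1⟩ := exists_between hr1
  have hρ0 : 0 < ρ := hr0.trans_lt hrρ
  obtain ⟨C, hC⟩ : ∃ C, ∀ k, ‖c k‖ * ρ ^ k ≤ C := by
    have hρ : (ρ : ℂ) ∈ ball (0 : ℂ) 1 := by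
      rwa [mem_ball_zero_iff, norm_real, Real.norm_of_nonneg hρ0.le]
    obtain ⟨C, hC⟩ := (hc ρ hρ).tendsto_atTop_zero.norm.bddAbove_range
    refine ⟨C, fun k => ?_⟩
    simpa [norm_real, Real.norm_of_nonneg hρ0.le] using hC ⟨k, rfl⟩
  set q := r / ρ
  have hq0 : 0 ≤ q := by positivity
  have hq1 : q < 1 := (div_lt_one hρ0).2 hrρ
  have hmajorant : Summable fun k : ℕ => C / ρ * (k * q ^ (k - 1)) := by
    refine Summable.mul_left _ ((summable_nat_add_iff 1).1 ?_)
    refine ((summable_pow_mul_geometric_of_norm_lt_one 1 (by rwa [Real.norm_of_nonneg hq0])).add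
      (summable_geometric_of_lt_one hq0 hq1)).congr fun k => ?_
    simp only [Nat.add_sub_cancel]
    push_cast
    ring
  refine .of_nonneg_of_le (fun k => by positivity) (fun k => ?_) hmajorant
  cases k with
  | zero => simp
  | succ k =>
    simp only [Nat.add_sub_cancel]
    calc ‖c (k + 1)‖ * ((k + 1 : ℕ) * r ^ k)
        = ‖c (k + 1)‖ * ρ ^ (k + 1) / ρ * ((k + 1 : ℕ) * q ^ k) := by
          simp only [q, div_pow]
          field_simp
          ring
      _ ≤ C / ρ * ((k + 1 : ℕ) * q ^ k) := by
          gcongr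
          exact hC _

/-- `e = id` gives the series itself, `e = (· + n + 1)` its tail. -/
theorem hasDerivAt_tsum_mul_pow_comp_injective
    (hc : ∀ w ∈ ball (0 : ℂ) 1, Summable fun k => c k * w ^ k) {e : ℕ → ℕ} (he : Injective e)
    {z : ℂ} (hz : z ∈ ball (0 : ℂ) 1) :
    HasDerivAt (fun w => ∑' k, c (e k) * w ^ e k) (∑' k, c (e k) * (e k * z ^ (e k - 1))) z := by
  obtain ⟨r, hzr, hr1⟩ := exists_between (mem_ball_zero_iff.1 hz)
  have hz' : z ∈ ball (0 : ℂ) r := mem_ball_zero_iff.2 hzr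
  refine hasDerivAt_tsum_of_isPreconnected
    ((summable_norm_mul_nat_mul_pow_sub_one hc ((norm_nonneg z).trans hzr.le) hr1).comp_injective he)
    isOpen_ball (convex_ball 0 r).isPreconnected
    (fun k w _ => (hasDerivAt_pow (e k) w).const_mul (c (e k))) (fun k w hw => ?_) hz'
    ((hc z hz).comp_injective he) hz'
  show _ ≤ ‖c (e k)‖ * (e k * r ^ (e k - 1))
  rw [norm_mul, norm_mul, norm_pow, Complex.norm_natCast]
  gcongr
  exact (mem_ball_zero_iff.1 hw).le

variable {F : ℂ → ℂ} (hF : ∀ w ∈ ball (0 : ℂ) 1, HasSum (fun k => c k * w ^ k) (F w))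
include hF

theorem hasDerivAt_of_hasSum_pow {z : ℂ} (hz : z ∈ ball (0 : ℂ) 1) :
    HasDerivAt F (∑' k : ℕ, c k * (k * z ^ (k - 1))) z := by
  have hsum : ∀ w ∈ ball (0 : ℂ) 1, Summable fun k => c k * w ^ k :=
    fun w hw => (hF w hw).summable
  refine (hasDerivAt_tsum_mul_pow_comp_injective hsum injective_id hz).congr_of_eventuallyEq ?_
  filter_upwards [isOpen_ball.mem_nhds hz] with w hw
  exact (hF w hw).tsum_eq.symm

theorem differentiableOn_of_hasSum_pow : DifferentiableOn ℂ F (ball (0 : ℂ) 1) :=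
  fun _ hz => (hasDerivAt_of_hasSum_pow hF hz).differentiableAt.differentiableWithinAt

theorem hasSum_mul_deriv_sub_of_hasSum_pow {z : ℂ} (hz : z ∈ ball (0 : ℂ) 1) :
    HasSum (fun k : ℕ => ((k : ℂ) - 1) * c k * z ^ k) (z * deriv F z - F z) := by
  have hderiv : Summable fun k : ℕ => c k * (k * z ^ (k - 1)) := by
    refine .of_norm_bounded (summable_norm_mul_nat_mul_pow_sub_one
      (fun w hw => (hF w hw).summable) (norm_nonneg z) (mem_ball_zero_iff.1 hz)) fun k => ?_
    rw [norm_mul, norm_mul, norm_pow, Complex.norm_natCast]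
  have hterm (k : ℕ) :
      ((k : ℂ) - 1) * c k * z ^ k = z * (c k * (k * z ^ (k - 1))) - c k * z ^ k := by
    cases k with
    | zero => simp
    | succ k =>
      push_cast
      ring
  rw [(hasDerivAt_of_hasSum_pow hF hz).deriv]
  simpa only [hterm] using (hderiv.hasSum.mul_left z).sub (hF z hz)

theorem coeff_eq_iteratedDeriv_div_factorial (m : ℕ) :
    c m = iteratedDeriv m F 0 / m.factorial := by
  have hp : HasFPowerSeriesAt F (FormalMultilinearSeries.ofScalars ℂ c) 0 := by
    rw [hasFPowerSeriesAt_iff]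
    filter_upwards [isOpen_ball.mem_nhds (mem_ball_self one_pos)] with w hw
    simpa [FormalMultilinearSeries.coeff_ofScalars, mul_comm] using hF w hw
  exact congrFun (FormalMultilinearSeries.ofScalars_series_injective ℂ ℂ
    (hp.eq_formalMultilinearSeries hp.analyticAt.hasFPowerSeriesAt)) m

theorem norm_coeff_le_of_norm_le {M : ℝ} (hM : ∀ w ∈ ball (0 : ℂ) 1, ‖F w‖ ≤ M) (m : ℕ) :
    ‖c m‖ ≤ M := by
  have hcauchy : ∀ r ∈ Ioo (0 : ℝ) 1, ‖c m‖ * r ^ m ≤ M := by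
    rintro r ⟨hr0, hr1⟩
    have hD := norm_iteratedDeriv_le_of_forall_mem_sphere_norm_le m hr0
      ((differentiableOn_of_hasSum_pow hF).diffContOnCl_ball (closedBall_subset_ball hr1))
      fun w hw => hM w (sphere_subset_ball hr1 hw)
    rw [coeff_eq_iteratedDeriv_div_factorial hF, norm_div, norm_natCast]
    rw [le_div_iff₀ (by positivity)] at hD
    calc ‖iteratedDeriv m F 0‖ / m.factorial * r ^ m
        = ‖iteratedDeriv m F 0‖ * r ^ m / m.factorial := by ring
      _ ≤ M := by rw [div_le_iff₀ (by positivity)]; linarith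
  have hlim : Tendsto (fun r : ℝ => ‖c m‖ * r ^ m) (𝓝[<] 1) (𝓝 ‖c m‖) := by
    have hcont : Continuous fun r : ℝ => ‖c m‖ * r ^ m := by fun_prop
    simpa using (hcont.tendsto 1).mono_left nhdsWithin_le_nhds
  exact le_of_tendsto hlim (eventually_of_mem (Ioo_mem_nhdsLT one_pos) hcauchy)

end PowerSeriesOnUnitDisc

theorem hasSum_add_one_div_two_mul_pow {r : ℝ} (hr0 : 0 ≤ r) (hr1 : r < 1) :
    HasSum (fun k : ℕ => (((k + 2 : ℕ) : ℝ) + 1) / (2 * (k + 2 : ℕ)) * r ^ (k + 2))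
      ((2 * r ^ 2 - r) / (2 * (1 - r)) - Real.log (1 - r) / 2) := by
  have hgeom : HasSum (fun k : ℕ => r ^ (k + 2)) (r ^ 2 / (1 - r)) := by
    simpa only [pow_add, mul_comm, div_eq_mul_inv] using
      (hasSum_geometric_of_lt_one hr0 hr1).mul_left (r ^ 2)
  have hlog : HasSum (fun k : ℕ => r ^ (k + 2) / (k + 2 : ℕ)) (-Real.log (1 - r) - r) := by
    have := (hasSum_nat_add_iff' 1).2
      (Real.hasSum_pow_div_log_of_abs_lt_one (by rwa [abs_of_nonneg hr0]))
    simp only [Finset.sum_range_one] at this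
    refine (by simpa using this : HasSum _ _).congr_fun fun k => ?_
    push_cast
    ring
  have hsum := (hgeom.add hlog).div_const 2
  rw [show (r ^ 2 / (1 - r) + (-Real.log (1 - r) - r)) / 2 =
      (2 * r ^ 2 - r) / (2 * (1 - r)) - Real.log (1 - r) / 2 by
    field_simp [show 1 - r ≠ 0 by linarith]
    ring] at hsum
  refine hsum.congr_fun fun k => ?_
  field_simp

theorem norm_mul_natCast_mul_pow_le {b z : ℂ} {i j : ℕ} (hi : 0 < i) (hij : i ≤ j)
    (hb : j * ‖b‖ ≤ 1 / 2) (hz : ‖z‖ ≤ 1) :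
    ‖b * ((j + 1 : ℕ) * z ^ j)‖ ≤ ((i : ℝ) + 1) / (2 * i) * ‖z‖ ^ i := by
  have hi' : (0 : ℝ) < i := by exact_mod_cast hi
  have hij' : (i : ℝ) ≤ j := by exact_mod_cast hij
  have hj' : (0 : ℝ) < j := hi'.trans_le hij'
  have hb' : ‖b‖ ≤ 1 / (2 * j) := by
    rw [le_div_iff₀ (by positivity)]
    linarith
  calc ‖b * ((j + 1 : ℕ) * z ^ j)‖ = ‖b‖ * ((j + 1) * ‖z‖ ^ j) := by
        rw [norm_mul, norm_mul, norm_pow, Complex.norm_natCast]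
        push_cast
        ring
    _ ≤ 1 / (2 * j) * ((j + 1) * ‖z‖ ^ j) := by gcongr
    _ = ((j : ℝ) + 1) / (2 * j) * ‖z‖ ^ j := by ring
    _ ≤ ((i : ℝ) + 1) / (2 * i) * ‖z‖ ^ i := by
        gcongr ?_ * ?_
        · rw [div_le_div_iff₀ (by positivity) (by positivity)]
          nlinarith
        · exact pow_le_pow_of_le_one (norm_nonneg z) hz hij

theorem stmt_5_general (f : ℂ → ℂ) (a : ℕ → ℂ) (n : ℕ) (hn : 2 ≤ n)
    (ha : ∀ z ∈ ball (0:ℂ) 1, HasSum (fun k : ℕ => a k * z ^ k) (f z))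
    (hΩ : ∀ z ∈ ball (0:ℂ) 1, ‖z * deriv f z - f z‖ < 1/2) :
    ∀ z ∈ ball (0:ℂ) 1,
      ‖deriv (fun w : ℂ => ∑' k : ℕ, a (k + n + 1) * w ^ (k + n + 1)) z‖ ≤
        (2 * ‖z‖^2 - ‖z‖) / (2 * (1 - ‖z‖)) - Real.log (1 - ‖z‖) / 2 := by
  intro z hz
  have hcoeff (j : ℕ) : (j : ℝ) * ‖a (j + 1)‖ ≤ 1 / 2 := by
    simpa [norm_mul] using norm_coeff_le_of_norm_le
      (fun w hw => hasSum_mul_deriv_sub_of_hasSum_pow ha hw) (fun w hw => (hΩ w hw).le) (j + 1)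
  have hz1 : ‖z‖ < 1 := mem_ball_zero_iff.1 hz
  have htail := hasDerivAt_tsum_mul_pow_comp_injective (e := fun k => k + n + 1)
    (fun w hw => (ha w hw).summable) (add_left_injective (n + 1)) hz
  rw [htail.deriv]
  refine tsum_of_norm_bounded (hasSum_add_one_div_two_mul_pow (norm_nonneg z) hz1) fun k => ?_
  exact norm_mul_natCast_mul_pow_le (by omega) (by omega : k + 2 ≤ k + n) (hcoeff (k + n)) hz1.le

theorem stmt_5 (f : ℂ → ℂ) (a : ℕ → ℂ) (n : ℕ) (hn : 2 ≤ n)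
    (hf : DifferentiableOn ℂ f (ball (0:ℂ) 1))
    (ha : ∀ z ∈ ball (0:ℂ) 1, HasSum (fun k : ℕ => a k * z ^ k) (f z))
    (ha0 : a 0 = 0) (ha1 : a 1 = 1)
    (hΩ : ∀ z ∈ ball (0:ℂ) 1, ‖z * deriv f z - f z‖ < 1/2) :
    ∀ z ∈ ball (0:ℂ) 1,
      ‖deriv (fun w : ℂ => ∑' k : ℕ, a (k + n + 1) * w ^ (k + n + 1)) z‖ ≤
        (2 * ‖z‖^2 - ‖z‖) / (2 * (1 - ‖z‖)) - Real.log (1 - ‖z‖) / 2 :=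
  stmt_5_general f a n hn ha hΩ
end

section
/- Let f(z) = z + a₂ z² ∈ Ω (so |a₂| ≤ 1/2). Then the second partial sum s₂(z) = z + a₂ z² satisfies Re(1 + z s₂''(z)/s₂'(z)) > 0 for all |z| < 1/2; that is, s₂ is convex in the disk of radius 1/2. -/
/-! With `u = 2 a₂ z` one has `1 + z s₂''(z) / s₂'(z) = 1 + u / (1 + u)`. Since `|a₂| ≤ 1/2` and
`|z| < 1/2`, `|u| < 1/2 < |1 + u|`, so `u / (1 + u)` lies in the unit disk and `1 + u / (1 + u)`
has positive real part. -/

open Complex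

lemma deriv_add_const_mul_sq (a : ℂ) :
    deriv (fun w : ℂ => w + a * w ^ 2) = fun w => 1 + 2 * a * w := by
  funext w
  rw [((hasDerivAt_id' w).fun_add ((hasDerivAt_pow 2 w).const_mul a)).deriv]
  ring

lemma deriv_const_add_const_mul (b c : ℂ) : deriv (fun w : ℂ => b + c * w) = fun _ => c := by
  funext w
  simp

lemma norm_lt_norm_add_of_two_mul_lt {E : Type*} [SeminormedAddGroup E] {x u : E}
    (h : 2 * ‖u‖ < ‖x‖) : ‖u‖ < ‖x + u‖ := by
  have := norm_sub_le (x + u) u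
  rw [add_sub_cancel_right] at this
  linarith

lemma re_one_add_pos_of_norm_lt_one {w : ℂ} (hw : ‖w‖ < 1) : 0 < (1 + w).re := by
  rw [add_re, one_re]
  linarith [neg_abs_le w.re, abs_re_le_norm w]

theorem stmt_7 (a₂ : ℂ) (ha₂ : ‖a₂‖ ≤ 1/2) :
    ∀ z : ℂ, ‖z‖ < 1/2 →
      0 < (1 + z * deriv (deriv (fun w : ℂ => w + a₂ * w ^ 2)) z /
            deriv (fun w : ℂ => w + a₂ * w ^ 2) z).re := by
  intro z hz
  set u := 2 * a₂ * z
  have hu : ‖u‖ < 1 / 2 := by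
    calc ‖u‖ = 2 * ‖a₂‖ * ‖z‖ := by simp [u]
      _ ≤ ‖z‖ := by nlinarith [norm_nonneg z]
      _ < 1 / 2 := hz
  have hu_lt : ‖u‖ < ‖1 + u‖ := norm_lt_norm_add_of_two_mul_lt (by rw [norm_one]; linarith)
  rw [deriv_add_const_mul_sq, deriv_const_add_const_mul, mul_comm z]
  apply re_one_add_pos_of_norm_lt_one
  rw [norm_div, div_lt_one ((norm_nonneg u).trans_lt hu_lt)]
  exact hu_lt
end

section
/- Let a₂, a₃ ∈ ℂ with |a₂| ≤ 1/2 and |a₃| ≤ 1/4, and let s₃(z) = z + a₂ z² + a₃ z³. Then Re(z s₃'(z)/s₃(z)) > 0 for all z with 0 < |z| < r₆, where r₆ = 2/3 is the positive root of 3r² + 4r − 4 = 0. -/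
open Metric Complex

theorem stmt_8 (a₂ a₃ : ℂ) (ha₂ : ‖a₂‖ ≤ 1/2) (ha₃ : ‖a₃‖ ≤ 1/4) :
    ∀ z : ℂ, 0 < ‖z‖ → ‖z‖ < 2/3 →
      0 < (z * deriv (fun w : ℂ => w + a₂ * w ^ 2 + a₃ * w ^ 3) z /
            (z + a₂ * z ^ 2 + a₃ * z ^ 3)).re := by
  intro z hz0 hz
  set r := ‖z‖ with hr
  have hz0' : z ≠ 0 := norm_pos_iff.mp hz0
  have hnz2 : ‖z ^ 2‖ = r ^ 2 := by simp [hr, norm_pow]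
  have hu : ‖a₂ * z + a₃ * z ^ 2‖ ≤ r / 2 + r ^ 2 / 4 := by
    calc ‖a₂ * z + a₃ * z ^ 2‖ ≤ ‖a₂ * z‖ + ‖a₃ * z ^ 2‖ := norm_add_le _ _
      _ = ‖a₂‖ * r + ‖a₃‖ * r ^ 2 := by simp [hr, norm_mul, norm_pow]
      _ ≤ r / 2 + r ^ 2 / 4 := by nlinarith [sq_nonneg r, norm_nonneg a₂, norm_nonneg a₃]
  have hd : ‖a₂ * z + 2 * a₃ * z ^ 2‖ ≤ r / 2 + r ^ 2 / 2 := by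
    calc ‖a₂ * z + 2 * a₃ * z ^ 2‖ ≤ ‖a₂ * z‖ + ‖2 * a₃ * z ^ 2‖ := norm_add_le _ _
      _ = ‖a₂‖ * r + 2 * (‖a₃‖ * r ^ 2) := by
          simp [hr, norm_mul, norm_pow]; ring
      _ ≤ r / 2 + r ^ 2 / 2 := by nlinarith [sq_nonneg r, norm_nonneg a₂, norm_nonneg a₃]
  have hu1 : (1 : ℝ) - (r / 2 + r ^ 2 / 4) ≤ ‖1 + (a₂ * z + a₃ * z ^ 2)‖ := by
    have h1 : (1 : ℝ) = ‖(1 : ℂ)‖ := by simp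
    have h2 : ‖(1 : ℂ)‖ ≤ ‖1 + (a₂ * z + a₃ * z ^ 2)‖ + ‖a₂ * z + a₃ * z ^ 2‖ := by
      calc ‖(1 : ℂ)‖ = ‖(1 + (a₂ * z + a₃ * z ^ 2)) + (-(a₂ * z + a₃ * z ^ 2))‖ := by ring_nf
        _ ≤ ‖1 + (a₂ * z + a₃ * z ^ 2)‖ + ‖-(a₂ * z + a₃ * z ^ 2)‖ := norm_add_le _ _
        _ = ‖1 + (a₂ * z + a₃ * z ^ 2)‖ + ‖a₂ * z + a₃ * z ^ 2‖ := by rw [norm_neg]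
    linarith
  have hpos : (0 : ℝ) < 1 - (r / 2 + r ^ 2 / 4) := by nlinarith
  have hne : (1 : ℂ) + (a₂ * z + a₃ * z ^ 2) ≠ 0 := by
    intro h
    rw [h] at hu1
    simp at hu1
    linarith
  have hderiv : deriv (fun w : ℂ => w + a₂ * w ^ 2 + a₃ * w ^ 3) z
      = 1 + 2 * a₂ * z + 3 * a₃ * z ^ 2 := by
    have h1 : HasDerivAt (fun w : ℂ => w + a₂ * w ^ 2 + a₃ * w ^ 3)
        (1 + a₂ * (2 * z ^ 1) + a₃ * (3 * z ^ 2)) z := by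
      exact ((hasDerivAt_id z).add ((hasDerivAt_pow 2 z).const_mul a₂)).add
        ((hasDerivAt_pow 3 z).const_mul a₃)
    rw [h1.deriv]; ring
  have hden : z + a₂ * z ^ 2 + a₃ * z ^ 3 ≠ 0 := by
    have h : z + a₂ * z ^ 2 + a₃ * z ^ 3 = z * (1 + (a₂ * z + a₃ * z ^ 2)) := by ring
    rw [h]; exact mul_ne_zero hz0' hne
  have key : z * (1 + 2 * a₂ * z + 3 * a₃ * z ^ 2) / (z + a₂ * z ^ 2 + a₃ * z ^ 3)
      = 1 + (a₂ * z + 2 * a₃ * z ^ 2) / (1 + (a₂ * z + a₃ * z ^ 2)) := by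
    have h : z + a₂ * z ^ 2 + a₃ * z ^ 3 = z * (1 + (a₂ * z + a₃ * z ^ 2)) := by ring
    rw [h, one_add_div hne, mul_div_mul_left _ _ hz0']
    congr 1; ring
  rw [hderiv, key]
  set q : ℂ := (a₂ * z + 2 * a₃ * z ^ 2) / (1 + (a₂ * z + a₃ * z ^ 2)) with hq
  have hqnorm : ‖q‖ < 1 := by
    rw [hq, norm_div]
    rw [div_lt_one (lt_of_lt_of_le hpos hu1)]
    have hmid : r / 2 + r ^ 2 / 2 < 1 - (r / 2 + r ^ 2 / 4) := by nlinarith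
    linarith
  have habs : |q.re| ≤ ‖q‖ := Complex.abs_re_le_norm q
  have : (1 + q).re = 1 + q.re := by simp
  rw [this]
  cases' abs_le.mp habs with h1 h2
  linarith
end

section
/- Let a₂, a₃ ∈ ℂ with |a₂| ≤ 1/2 and |a₃| ≤ 1/4, and let s₃(z) = z + a₂ z² + a₃ z³. Then Re(s₃'(z)) > 0 for all |z| < 2/3. -/
open Metric Complex

theorem stmt_9 (a₂ a₃ : ℂ) (ha₂ : ‖a₂‖ ≤ 1/2) (ha₃ : ‖a₃‖ ≤ 1/4) :
    ∀ z : ℂ, ‖z‖ < 2/3 →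
      0 < (deriv (fun w : ℂ => w + a₂ * w ^ 2 + a₃ * w ^ 3) z).re := by
  intro z hz
  have hd : deriv (fun w : ℂ => w + a₂ * w ^ 2 + a₃ * w ^ 3) z
      = 1 + 2 * a₂ * z + 3 * a₃ * z ^ 2 := by
    have h : HasDerivAt (fun w : ℂ => w + a₂ * w ^ 2 + a₃ * w ^ 3)
        (1 + a₂ * (2 * z ^ 1) + a₃ * (3 * z ^ 2)) z := by
      exact ((hasDerivAt_id z).add (((hasDerivAt_pow 2 z).const_mul a₂))).add
        ((hasDerivAt_pow 3 z).const_mul a₃)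
    rw [h.deriv]; ring
  rw [hd]
  have hzn : (0:ℝ) ≤ ‖z‖ := norm_nonneg z
  have hb : ‖2 * a₂ * z + 3 * a₃ * z ^ 2‖ < 1 := by
    calc ‖2 * a₂ * z + 3 * a₃ * z ^ 2‖
        ≤ ‖2 * a₂ * z‖ + ‖3 * a₃ * z ^ 2‖ := norm_add_le _ _
      _ = 2 * ‖a₂‖ * ‖z‖ + 3 * ‖a₃‖ * ‖z‖ ^ 2 := by
          simp [norm_mul, norm_pow]
      _ ≤ 2 * (1/2) * ‖z‖ + 3 * (1/4) * ‖z‖ ^ 2 := by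
          gcongr
      _ < 2 * (1/2) * (2/3) + 3 * (1/4) * (2/3) ^ 2 := by gcongr <;> norm_num
      _ = 1 := by norm_num
  have hre : ((1:ℂ) + 2 * a₂ * z + 3 * a₃ * z ^ 2).re
      = 1 + (2 * a₂ * z + 3 * a₃ * z ^ 2).re := by
    simp [add_assoc]
  rw [hre]
  have h1 : |(2 * a₂ * z + 3 * a₃ * z ^ 2).re| ≤ ‖2 * a₂ * z + 3 * a₃ * z ^ 2‖ :=
    Complex.abs_re_le_norm _
  nlinarith [neg_abs_le (2 * a₂ * z + 3 * a₃ * z ^ 2).re]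
end

section
/- If f ∈ Ω (i.e., f analytic on D, f(0)=0, f'(0)=1, |z f'(z)-f(z)| < 1/2 on D), then Re(f'(z)) ≥ 1 - |z| for all z ∈ D; consequently f' has positive real part on D and f is close-to-convex. -/
open Metric Complex Set

/-! With `g = dslope f 0` (that is, `g z = f z / z`) one has `z f' - f = z² g'`, so the Schwarz
lemma, applied twice to peel off the double zero of this function of modulus `< 1/2`, gives
`‖g'‖ ≤ 1/2` on the disk. Then `f' - f'(0) = (g - g 0) + z g'`, and the mean value theorem
bounds both terms by `‖z‖ / 2`, so `‖f' z - 1‖ ≤ ‖z‖`. -/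

variable {E : Type*} [NormedAddCommGroup E] [NormedSpace ℂ E]

theorem norm_le_div_of_forall_norm_sub_smul_le {ψ : ℂ → E} {c : ℂ} {R M : ℝ}
    (hψ : DifferentiableOn ℂ ψ (ball c R)) (hM : ∀ z ∈ ball c R, ‖(z - c) • ψ z‖ ≤ M)
    {z : ℂ} (hz : z ∈ ball c R) : ‖ψ z‖ ≤ M / R := by
  set φ : ℂ → E := fun w => (w - c) • ψ w
  have hφ : DifferentiableOn ℂ φ (ball c R) :=
    (differentiableOn_id.sub_const c).smul hψ
  have hmaps : MapsTo φ (ball c R) (closedBall (φ c) M) := fun w hw => by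
    simpa [φ] using hM w hw
  have hdslope : dslope φ c z = ψ z := by
    rcases eq_or_ne z c with rfl | hne
    · have hc : HasDerivAt φ ((z - z) • deriv ψ z + (1 : ℂ) • ψ z) z :=
        ((hasDerivAt_id z).sub_const z).smul
          ((hψ.differentiableAt (isOpen_ball.mem_nhds hz)).hasDerivAt)
      simpa using hc.deriv
    · exact dslope_sub_smul_of_ne ψ hne
  simpa [hdslope] using norm_dslope_le_div_of_mapsTo_ball hφ hmaps hz

theorem smul_dslope_zero_of_apply_zero {f : ℂ → E} (hf0 : f 0 = 0) (w : ℂ) :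
    w • dslope f 0 w = f w := by
  simpa [hf0] using sub_smul_dslope f 0 w

variable [CompleteSpace E]

theorem deriv_eq_dslope_add_smul_deriv_dslope {f : ℂ → E} {R : ℝ}
    (hf : DifferentiableOn ℂ f (ball 0 R)) (hf0 : f 0 = 0) {z : ℂ} (hz : z ∈ ball 0 R) :
    deriv f z = dslope f 0 z + z • deriv (dslope f 0) z := by
  have hg : DifferentiableAt ℂ (dslope f 0) z :=
    ((differentiableOn_dslope (ball_mem_nhds 0 (pos_of_mem_ball hz))).2 hf).differentiableAt
      (isOpen_ball.mem_nhds hz)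
  have hfg : f = fun w => w • dslope f 0 w :=
    funext fun w => (smul_dslope_zero_of_apply_zero hf0 w).symm
  have hderiv : HasDerivAt (fun w => w • dslope f 0 w)
      (z • deriv (dslope f 0) z + (1 : ℂ) • dslope f 0 z) z :=
    (hasDerivAt_id z).smul hg.hasDerivAt
  conv_lhs => rw [hfg]
  rw [hderiv.deriv, one_smul, add_comm]

theorem norm_deriv_dslope_le {f : ℂ → E} {R M : ℝ} (hf : DifferentiableOn ℂ f (ball 0 R))
    (hf0 : f 0 = 0) (hM : ∀ z ∈ ball 0 R, ‖z • deriv f z - f z‖ ≤ M)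
    {z : ℂ} (hz : z ∈ ball 0 R) : ‖deriv (dslope f 0) z‖ ≤ M / R ^ 2 := by
  have hg' : DifferentiableOn ℂ (deriv (dslope f 0)) (ball 0 R) :=
    ((differentiableOn_dslope (ball_mem_nhds 0 (pos_of_mem_ball hz))).2 hf).deriv
      isOpen_ball
  have hsq : ∀ w ∈ ball 0 R, ‖(w - 0) • w • deriv (dslope f 0) w‖ ≤ M := fun w hw => by
    simpa [deriv_eq_dslope_add_smul_deriv_dslope hf hf0 hw, ← smul_dslope_zero_of_apply_zero hf0 w,
      smul_add] using hM w hw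
  have hlin : ∀ w ∈ ball 0 R, ‖(w - 0) • deriv (dslope f 0) w‖ ≤ M / R := fun w hw => by
    simpa using norm_le_div_of_forall_norm_sub_smul_le
      (differentiableOn_id.smul hg') hsq hw
  simpa [div_div, sq] using norm_le_div_of_forall_norm_sub_smul_le hg' hlin hz

theorem norm_deriv_sub_deriv_zero_le {f : ℂ → E} {R M : ℝ} (hf : DifferentiableOn ℂ f (ball 0 R))
    (hf0 : f 0 = 0) (hM : ∀ z ∈ ball 0 R, ‖z • deriv f z - f z‖ ≤ M)
    {z : ℂ} (hz : z ∈ ball 0 R) : ‖deriv f z - deriv f 0‖ ≤ 2 * M / R ^ 2 * ‖z‖ := by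
  have h0 : (0 : ℂ) ∈ ball 0 R := mem_ball_self (pos_of_mem_ball hz)
  have hg : DifferentiableOn ℂ (dslope f 0) (ball 0 R) :=
    (differentiableOn_dslope (isOpen_ball.mem_nhds h0)).2 hf
  have hg_lip : ‖dslope f 0 z - dslope f 0 0‖ ≤ M / R ^ 2 * ‖z - 0‖ :=
    (convex_ball 0 R).norm_image_sub_le_of_norm_deriv_le
      (fun w hw => hg.differentiableAt (isOpen_ball.mem_nhds hw))
      (fun w hw => norm_deriv_dslope_le hf hf0 hM hw) h0 hz
  have hsmul : ‖z • deriv (dslope f 0) z‖ ≤ M / R ^ 2 * ‖z‖ := by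
    rw [norm_smul, mul_comm]
    exact mul_le_mul_of_nonneg_right (norm_deriv_dslope_le hf hf0 hM hz) (norm_nonneg z)
  calc ‖deriv f z - deriv f 0‖
      = ‖(dslope f 0 z - dslope f 0 0) + z • deriv (dslope f 0) z‖ := by
        rw [deriv_eq_dslope_add_smul_deriv_dslope hf hf0 hz, dslope_same]; abel_nf
    _ ≤ M / R ^ 2 * ‖z‖ + M / R ^ 2 * ‖z‖ := by
        refine (norm_add_le _ _).trans (add_le_add ?_ hsmul)
        simpa using hg_lip
    _ = 2 * M / R ^ 2 * ‖z‖ := by ring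

theorem stmt_10 (f : ℂ → ℂ)
    (hf : DifferentiableOn ℂ f (ball (0:ℂ) 1))
    (hf0 : f 0 = 0) (hf1 : deriv f 0 = 1)
    (hΩ : ∀ z ∈ ball (0:ℂ) 1, ‖z * deriv f z - f z‖ < 1/2) :
    ∀ z ∈ ball (0:ℂ) 1, 1 - ‖z‖ ≤ (deriv f z).re ∧ 0 < (deriv f z).re := by
  intro z hz
  have hdist : ‖deriv f z - 1‖ ≤ ‖z‖ := by
    simpa [hf1] using norm_deriv_sub_deriv_zero_le hf hf0 (fun w hw => (hΩ w hw).le) hz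
  have hre : 1 - ‖z‖ ≤ (deriv f z).re := by
    have := (abs_re_le_norm (deriv f z - 1)).trans hdist
    rw [sub_re, one_re] at this
    linarith [neg_abs_le ((deriv f z).re - 1)]
  exact ⟨hre, by linarith [mem_ball_zero_iff.mp hz]⟩
end

section
/- For μ ∈ [-1,1], the function f_μ(z) = z + (μ/2) z² + ((1-μ²)/2) Σ_{k≥1} ((-μ)^{k-1}/(k+1)) z^{k+2} satisfies z f_μ'(z) - f_μ(z) = (1/2) z² (μ + z)/(1 + μ z) for all z in the unit disk, and hence |z f_μ'(z) - f_μ(z)| < 1/2 on the disk, so f_μ ∈ Ω. -/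
open Metric Complex

/-!
Write `f = z + (μ/2) z² + ((1 - μ²)/2) g` with `g z = ∑ (-μ)ᵏ z^(k+3) / (k+2)`. Differentiating
termwise, the Euler operator `z d/dz - 1` multiplies `z^(k+3)` by `k + 2`, so it turns `g` into the
geometric series `∑ (-μ)ᵏ z^(k+3) = z³ / (1 + μz)`; the closed form follows by algebra. The bound
comes from `|1 + μz|² - |μ + z|² = (1 - μ²)(1 - |z|²) ≥ 0` together with `|z|² < 1`.
-/

section PowerSeries

variable {b : ℕ → ℂ} {C : ℝ} {z : ℂ}

lemma summable_mul_pow_add_of_norm_le (hb : ∀ k, ‖b k‖ ≤ C) (j : ℕ) (hz : ‖z‖ < 1) :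
    Summable fun k => b k * z ^ (k + j) := by
  refine .of_norm_bounded ((summable_geometric_of_lt_one (norm_nonneg z) hz).mul_left C)
    fun k => ?_
  rw [norm_mul, norm_pow]
  exact mul_le_mul (hb k) (pow_le_pow_of_le_one (norm_nonneg z) hz.le (by omega))
    (by positivity) ((norm_nonneg _).trans (hb 0))

variable {n : ℕ}

lemma hasDerivAt_tsum_mul_pow_succ (hb : ∀ k, ‖((k + n + 1 : ℕ) : ℂ) * b k‖ ≤ C)
    (hz : ‖z‖ < 1) :
    HasDerivAt (fun w => ∑' k, b k * w ^ (k + n + 1))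
      (∑' k, ((k + n + 1 : ℕ) : ℂ) * b k * z ^ (k + n)) z := by
  obtain ⟨r, hzr, hr1⟩ := exists_between hz
  have hr0 : 0 < r := (norm_nonneg z).trans_lt hzr
  refine hasDerivAt_tsum_of_isPreconnected (g := fun k w => b k * w ^ (k + n + 1))
    (g' := fun k w => ((k + n + 1 : ℕ) : ℂ) * b k * w ^ (k + n)) (u := fun k => C * r ^ k)
    ((summable_geometric_of_lt_one hr0.le hr1).mul_left C) isOpen_ball
    (convex_ball (0 : ℂ) r).isPreconnected (fun k w _ => ?_) (fun k w hw => ?_)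
    (mem_ball_self hr0) ?_ (mem_ball_zero_iff.2 hzr)
  · refine ((hasDerivAt_pow (k + n + 1) w).const_mul (b k)).congr_deriv ?_
    rw [Nat.add_sub_cancel]
    ring
  · rw [mem_ball_zero_iff] at hw
    rw [norm_mul, norm_pow]
    exact mul_le_mul (hb k) ((pow_le_pow_left₀ (norm_nonneg w) hw.le _).trans
      (pow_le_pow_of_le_one hr0.le hr1.le (by omega))) (by positivity)
      ((norm_nonneg _).trans (hb 0))
  · simp

lemma mul_tsum_deriv_sub_tsum (hb : ∀ k, ‖((k + n + 1 : ℕ) : ℂ) * b k‖ ≤ C) (hz : ‖z‖ < 1) :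
    z * ∑' k, ((k + n + 1 : ℕ) : ℂ) * b k * z ^ (k + n) - ∑' k, b k * z ^ (k + n + 1) =
      ∑' k, ((k + n : ℕ) : ℂ) * b k * z ^ (k + n + 1) := by
  have hb' : ∀ k, ‖b k‖ ≤ C := fun k => by
    refine le_trans ?_ (hb k)
    rw [norm_mul, Complex.norm_natCast]
    exact le_mul_of_one_le_left (norm_nonneg _) (by norm_cast; omega)
  have hderiv : Summable fun k => z * (((k + n + 1 : ℕ) : ℂ) * b k * z ^ (k + n)) := by
    simpa only [mul_assoc, mul_left_comm z, ← pow_succ'] using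
      (summable_mul_pow_add_of_norm_le hb n hz).mul_left z
  have hfun : Summable fun k => b k * z ^ (k + n + 1) :=
    summable_mul_pow_add_of_norm_le hb' (n + 1) hz
  rw [← tsum_mul_left, ← hderiv.tsum_sub hfun]
  congr 1 with k
  push_cast
  ring

end PowerSeries

section ExtremalFunction

variable {m z : ℂ}

lemma norm_natCast_mul_neg_pow_div_le (hm : ‖m‖ ≤ 1) (k : ℕ) :
    ‖((k + 2 + 1 : ℕ) : ℂ) * ((-m) ^ k / (k + 2))‖ ≤ 2 := by
  have hk : ((k : ℂ) + 2) = ((k + 2 : ℕ) : ℂ) := by push_cast; rfl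
  rw [hk, norm_mul, norm_div, norm_pow, norm_neg, Complex.norm_natCast, Complex.norm_natCast]
  have hq : ((k + 2 + 1 : ℕ) : ℝ) / (k + 2 : ℕ) ≤ 2 := by
    rw [div_le_iff₀ (by positivity)]
    push_cast
    linarith
  calc ((k + 2 + 1 : ℕ) : ℝ) * (‖m‖ ^ k / (k + 2 : ℕ))
      = ‖m‖ ^ k * (((k + 2 + 1 : ℕ) : ℝ) / (k + 2 : ℕ)) := by ring
    _ ≤ 1 * 2 := mul_le_mul (pow_le_one₀ (norm_nonneg m) hm) hq (by positivity) zero_le_one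
    _ = 2 := one_mul 2

lemma norm_mul_lt_one (hm : ‖m‖ ≤ 1) (hz : ‖z‖ < 1) : ‖m * z‖ < 1 := by
  rw [norm_mul]
  exact (mul_le_of_le_one_left (norm_nonneg z) hm).trans_lt hz

lemma one_add_mul_ne_zero (hm : ‖m‖ ≤ 1) (hz : ‖z‖ < 1) : 1 + m * z ≠ 0 := by
  intro h
  have := norm_mul_lt_one hm hz
  rw [eq_neg_of_add_eq_zero_right h, norm_neg, norm_one] at this
  exact lt_irrefl 1 this

lemma mul_deriv_sub_eq (hm : ‖m‖ ≤ 1) {f : ℂ → ℂ}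
    (hf : ∀ z : ℂ, f z = z + (m / 2) * z ^ 2 +
      ((1 - m ^ 2) / 2) * ∑' k : ℕ, ((-m) ^ k / (k + 2)) * z ^ (k + 3))
    (hz : ‖z‖ < 1) :
    z * deriv f z - f z = (1 / 2) * z ^ 2 * (m + z) / (1 + m * z) := by
  have hb := norm_natCast_mul_neg_pow_div_le hm
  have hg := hasDerivAt_tsum_mul_pow_succ hb hz
  have heuler := mul_tsum_deriv_sub_tsum hb hz
  have hf' := (((hasDerivAt_id z).add ((hasDerivAt_pow 2 z).const_mul (m / 2))).add
    (hg.const_mul ((1 - m ^ 2) / 2))).congr_of_eventuallyEq (.of_forall hf)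
  have hgeom : (1 + m * z) * ∑' k, ((k + 2 : ℕ) : ℂ) * ((-m) ^ k / (k + 2)) * z ^ (k + 2 + 1)
      = z ^ 3 := by
    have hterm : ∀ k : ℕ, ((k + 2 : ℕ) : ℂ) * ((-m) ^ k / (k + 2)) * z ^ (k + 2 + 1) =
        z ^ 3 * (-(m * z)) ^ k := fun k => by
      have hk : (k : ℂ) + 2 ≠ 0 := by norm_cast
      push_cast
      field_simp
      ring
    have hmz : ‖-(m * z)‖ < 1 := by rw [norm_neg]; exact norm_mul_lt_one hm hz
    rw [tsum_congr hterm, tsum_mul_left, tsum_geometric_of_norm_lt_one hmz, sub_neg_eq_add]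
    field_simp [one_add_mul_ne_zero hm hz]
  rw [hf'.deriv, hf z, eq_div_iff (one_add_mul_ne_zero hm hz)]
  linear_combination (1 + m * z) * ((1 - m ^ 2) / 2) * heuler + ((1 - m ^ 2) / 2) * hgeom

end ExtremalFunction

section DiskAutomorphism

variable {μ : ℝ} {z : ℂ}

lemma normSq_one_add_ofReal_mul_sub_normSq (μ : ℝ) (z : ℂ) :
    normSq (1 + μ * z) - normSq (μ + z) = (1 - μ ^ 2) * (1 - normSq z) := by
  simp only [normSq_apply, add_re, add_im, mul_re, mul_im, one_re, one_im, ofReal_re, ofReal_im]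
  ring

lemma norm_ofReal_add_le_norm_one_add_mul (hμ : |μ| ≤ 1) (hz : ‖z‖ ≤ 1) :
    ‖(μ : ℂ) + z‖ ≤ ‖1 + μ * z‖ := by
  have h := normSq_one_add_ofReal_mul_sub_normSq μ z
  rw [normSq_eq_norm_sq, normSq_eq_norm_sq, normSq_eq_norm_sq] at h
  have hμ2 : μ ^ 2 ≤ 1 := by rw [← sq_abs]; exact pow_le_one₀ (abs_nonneg μ) hμ
  have hz2 : ‖z‖ ^ 2 ≤ 1 := pow_le_one₀ (norm_nonneg z) hz
  rw [← pow_le_pow_iff_left₀ (norm_nonneg _) (norm_nonneg _) two_ne_zero]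
  nlinarith [mul_nonneg (sub_nonneg.2 hμ2) (sub_nonneg.2 hz2)]

lemma norm_half_mul_sq_mul_div_lt (hμ : |μ| ≤ 1) (hz : ‖z‖ < 1) :
    ‖(1 / 2) * z ^ 2 * ((μ : ℂ) + z) / (1 + μ * z)‖ < 1 / 2 := by
  have hm : ‖(μ : ℂ)‖ ≤ 1 := by rwa [norm_real, Real.norm_eq_abs]
  have hden : 0 < ‖1 + μ * z‖ := norm_pos_iff.2 (one_add_mul_ne_zero hm hz)
  have hz2 : ‖z‖ ^ 2 < 1 := pow_lt_one₀ (norm_nonneg z) hz two_ne_zero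
  have hhalf : ‖(1 / 2 : ℂ)‖ = 1 / 2 := by norm_num
  rw [norm_div, norm_mul, norm_mul, norm_pow, hhalf, div_lt_iff₀ hden]
  calc 1 / 2 * ‖z‖ ^ 2 * ‖(μ : ℂ) + z‖ ≤ 1 / 2 * ‖z‖ ^ 2 * ‖1 + μ * z‖ := by
        gcongr
        exact norm_ofReal_add_le_norm_one_add_mul hμ hz.le
    _ < 1 / 2 * ‖1 + μ * z‖ := by nlinarith

end DiskAutomorphism

theorem stmt_11 (μ : ℝ) (hμ : μ ∈ Set.Icc (-1 : ℝ) 1) (f : ℂ → ℂ)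
    (hf : ∀ z : ℂ, f z = z + ((μ : ℂ) / 2) * z ^ 2 +
      ((1 - (μ : ℂ) ^ 2) / 2) * ∑' k : ℕ, ((-(μ : ℂ)) ^ k / (k + 2)) * z ^ (k + 3)) :
    ∀ z ∈ ball (0:ℂ) 1,
      z * deriv f z - f z = (1/2) * z ^ 2 * ((μ : ℂ) + z) / (1 + (μ : ℂ) * z) ∧
      ‖z * deriv f z - f z‖ < 1/2 := by
  intro z hz
  rw [mem_ball_zero_iff] at hz
  have hμ' : |μ| ≤ 1 := abs_le.2 hμ
  have h := mul_deriv_sub_eq (by rwa [norm_real, Real.norm_eq_abs]) hf hz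
  exact ⟨h, h ▸ norm_half_mul_sq_mul_div_lt hμ' hz⟩
end

section
/- Let λ > 0 and let f be analytic on the unit disk with f(0)=0, f'(0)=1, and |z f'(z) - f(z)| < λ on the disk. Then |z| - λ|z|² ≤ |f(z)| ≤ |z| + λ|z|² and 1 - 2λ|z| ≤ |f'(z)| ≤ 1 + 2λ|z| for all z in the disk. -/
open Metric Complex

lemma aux_dslope_12 {h : ℂ → ℂ} (hd : DifferentiableOn ℂ h (ball (0:ℂ) 1))
    (ha : AnalyticAt ℂ h 0) :
    DifferentiableOn ℂ (dslope h 0) (ball (0:ℂ) 1) ∧ AnalyticAt ℂ (dslope h 0) 0 := by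
  obtain ⟨p, hp⟩ := ha
  have h2 : AnalyticAt ℂ (dslope h 0) 0 := ⟨_, hp.has_fpower_series_dslope_fslope⟩
  refine ⟨fun z hz => ?_, h2⟩
  rcases eq_or_ne z 0 with rfl | hne
  · exact h2.differentiableAt.differentiableWithinAt
  · exact ((differentiableAt_dslope_of_ne hne).2
      (hd.differentiableAt (isOpen_ball.mem_nhds hz))).differentiableWithinAt

theorem stmt_12 (lam : ℝ) (hlam : 0 < lam) (f : ℂ → ℂ)
    (hf : DifferentiableOn ℂ f (ball (0:ℂ) 1))
    (hf0 : f 0 = 0) (hf1 : deriv f 0 = 1)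
    (hΩ : ∀ z ∈ ball (0:ℂ) 1, ‖z * deriv f z - f z‖ < lam) :
    ∀ z ∈ ball (0:ℂ) 1,
      (‖z‖ - lam * ‖z‖^2 ≤ ‖f z‖ ∧ ‖f z‖ ≤ ‖z‖ + lam * ‖z‖^2) ∧
      (1 - 2 * lam * ‖z‖ ≤ ‖deriv f z‖ ∧ ‖deriv f z‖ ≤ 1 + 2 * lam * ‖z‖) := by
  have h0mem : (0:ℂ) ∈ ball (0:ℂ) 1 := mem_ball_self one_pos
  have hfa : AnalyticOnNhd ℂ f (ball (0:ℂ) 1) := hf.analyticOnNhd isOpen_ball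
  have hFa : AnalyticOnNhd ℂ (deriv f) (ball (0:ℂ) 1) := hfa.deriv
  set g : ℂ → ℂ := fun z => z * deriv f z - f z with hgdef
  have hgd : DifferentiableOn ℂ g (ball (0:ℂ) 1) :=
    ((differentiableOn_id.mul hFa.differentiableOn)).sub hf
  have hga : AnalyticOnNhd ℂ g (ball (0:ℂ) 1) := hgd.analyticOnNhd isOpen_ball
  have hg0 : g 0 = 0 := by simp [hgdef, hf0]
  have hdf0 : DifferentiableAt ℂ f 0 := hf.differentiableAt (isOpen_ball.mem_nhds h0mem)
  have hdF0 : DifferentiableAt ℂ (deriv f) 0 :=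
    (hFa 0 h0mem).differentiableAt
  have hg'0 : deriv g 0 = 0 := by
    have hG : HasDerivAt g (((1:ℂ) * deriv f 0 + 0 * deriv (deriv f) 0) - deriv f 0) 0 := by
      exact ((hasDerivAt_id 0).mul hdF0.hasDerivAt).sub hdf0.hasDerivAt
    have := hG.deriv
    simpa using this
  -- the function p = g z / z^2
  set q : ℂ → ℂ := dslope g 0 with hqdef
  have hq := aux_dslope_12 hgd (hga 0 h0mem)
  set p : ℂ → ℂ := dslope q 0 with hpdef
  have hp := aux_dslope_12 hq.1 hq.2
  have hpd : DifferentiableOn ℂ p (ball (0:ℂ) 1) := hp.1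
  have hq_eq : ∀ w : ℂ, w ≠ 0 → q w = g w / w := by
    intro w hw
    rw [hqdef, dslope_of_ne g hw, slope_def_field, hg0]
    simp
  have hq0 : q 0 = 0 := by rw [hqdef, dslope_same]; exact hg'0
  have hp_eq : ∀ w : ℂ, w ≠ 0 → p w = g w / w ^ 2 := by
    intro w hw
    rw [hpdef, dslope_of_ne q hw, slope_def_field, hq0, hq_eq w hw, sub_zero, sub_zero,
      div_div, sq]
  -- bound ‖p z‖ ≤ lam on the ball, by the maximum modulus principle
  have hp_bound : ∀ z ∈ ball (0:ℂ) 1, ‖p z‖ ≤ lam := by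
    intro z hz
    have hz1 : ‖z‖ < 1 := by simpa using hz
    have key : ∀ r ∈ Set.Ioo (max ‖z‖ (1/2)) 1, ‖p z‖ ≤ lam / r ^ 2 := by
      intro r hr
      have hrz : ‖z‖ < r := lt_of_le_of_lt (le_max_left _ _) hr.1
      have hr0 : (0:ℝ) < r := lt_of_le_of_lt (by norm_num) (lt_of_le_of_lt (le_max_right _ _) hr.1)
      have hsub : closedBall (0:ℂ) r ⊆ ball (0:ℂ) 1 := closedBall_subset_ball hr.2
      have hdc : DiffContOnCl ℂ p (ball (0:ℂ) r) := by
        refine ⟨hpd.mono (ball_subset_ball hr.2.le), ?_⟩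
        rw [closure_ball (0:ℂ) hr0.ne']
        exact (hpd.mono hsub).continuousOn
      refine norm_le_of_forall_mem_frontier_norm_le isBounded_ball hdc ?_ ?_
      · intro w hw
        rw [frontier_ball (0:ℂ) hr0.ne'] at hw
        have hwn : ‖w‖ = r := by simpa using hw
        have hw0 : w ≠ 0 := by
          intro h; rw [h, norm_zero] at hwn; exact hr0.ne hwn
        have hwb : w ∈ ball (0:ℂ) 1 := by
          simp only [mem_ball, dist_zero_right]; rw [hwn]; exact hr.2
        rw [hp_eq w hw0]
        rw [norm_div, norm_pow, hwn]
        exact div_le_div_of_nonneg_right (hΩ w hwb).le (by positivity) |>.trans_eq rfl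
      · exact subset_closure (by simp only [mem_ball, dist_zero_right]; exact hrz)
    have ht : Filter.Tendsto (fun r : ℝ => lam / r ^ 2) (nhdsWithin 1 (Set.Iio 1)) (nhds lam) := by
      have : Filter.Tendsto (fun r : ℝ => lam / r ^ 2) (nhds 1) (nhds (lam / 1 ^ 2)) := by
        apply Filter.Tendsto.div tendsto_const_nhds
        · exact (continuous_pow 2).tendsto 1
        · norm_num
      simpa using this.mono_left nhdsWithin_le_nhds
    refine ge_of_tendsto ht ?_
    have hmax : max ‖z‖ (1/2) < 1 := by
      apply max_lt hz1; norm_num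
    filter_upwards [Ioo_mem_nhdsLT hmax] with r hr using key r hr
  -- bound on g
  have hgb : ∀ z ∈ ball (0:ℂ) 1, ‖g z‖ ≤ lam * ‖z‖ ^ 2 := by
    intro z hz
    rcases eq_or_ne z 0 with rfl | hz0
    · simp [hg0]
    · have hzp : (0:ℝ) < ‖z‖ := norm_pos_iff.2 hz0
      have := hp_bound z hz
      rw [hp_eq z hz0, norm_div, norm_pow, div_le_iff₀ (by positivity)] at this
      linarith [this]
  -- the function k = f z / z
  set k : ℂ → ℂ := dslope f 0 with hkdef
  have hk := aux_dslope_12 hf (hfa 0 h0mem)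
  have hk0 : k 0 = 1 := by rw [hkdef, dslope_same]; exact hf1
  have hk_eq : ∀ w : ℂ, w ≠ 0 → k w = f w / w := by
    intro w hw
    rw [hkdef, dslope_of_ne f hw, slope_def_field, hf0]
    simp
  -- deriv of k away from 0
  have hk'ne : ∀ w ∈ ball (0:ℂ) 1, w ≠ 0 → deriv k w = g w / w ^ 2 := by
    intro w hw hw0
    have hev : k =ᶠ[nhds w] fun z => f z * z⁻¹ := by
      filter_upwards [isOpen_ne.mem_nhds hw0] with z hz
      rw [hk_eq z hz, div_eq_mul_inv]
    rw [hev.deriv_eq]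
    have hdfw : DifferentiableAt ℂ f w := hf.differentiableAt (isOpen_ball.mem_nhds hw)
    have hD : HasDerivAt (fun z : ℂ => f z * z⁻¹)
        (deriv f w * w⁻¹ + f w * (-(w ^ 2)⁻¹)) w :=
      hdfw.hasDerivAt.mul (hasDerivAt_inv hw0)
    rw [hD.deriv, hgdef]
    field_simp
    ring
  -- bound on deriv k on the ball
  have hkb : ∀ w ∈ ball (0:ℂ) 1, ‖deriv k w‖ ≤ lam := by
    intro w hw
    rcases eq_or_ne w 0 with rfl | hw0
    · -- use continuity of deriv k at 0
      have hka : AnalyticOnNhd ℂ k (ball (0:ℂ) 1) := hk.1.analyticOnNhd isOpen_ball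
      have hcont : ContinuousAt (deriv k) 0 :=
        (hka.deriv.differentiableOn.continuousOn).continuousAt (isOpen_ball.mem_nhds h0mem)
      have htend : Filter.Tendsto (fun w => ‖deriv k w‖) (nhdsWithin 0 {(0:ℂ)}ᶜ)
          (nhds ‖deriv k 0‖) :=
        (hcont.norm).continuousWithinAt.tendsto
      refine le_of_tendsto htend ?_
      have hb : ball (0:ℂ) 1 ∈ nhdsWithin (0:ℂ) {(0:ℂ)}ᶜ :=
        mem_nhdsWithin_of_mem_nhds (isOpen_ball.mem_nhds h0mem)
      filter_upwards [hb, self_mem_nhdsWithin] with w hw1 hw2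
      rw [hk'ne w hw1 hw2]
      have := hgb w hw1
      rw [norm_div, norm_pow]
      rcases eq_or_ne (‖w‖) 0 with h0 | h0
      · simp only [h0]; simp [hlam.le]
      · rw [div_le_iff₀ (by positivity)]
        calc ‖g w‖ ≤ lam * ‖w‖ ^ 2 := this
          _ = lam * ‖w‖ ^ 2 := rfl
    · rw [hk'ne w hw hw0, norm_div, norm_pow]
      have hwpos : (0:ℝ) < ‖w‖ := norm_pos_iff.2 hw0
      rw [div_le_iff₀ (by positivity)]
      exact hgb w hw
  -- key estimate via mean value inequality
  have hkey : ∀ z ∈ ball (0:ℂ) 1, ‖k z - 1‖ ≤ lam * ‖z‖ := by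
    intro z hz
    have := (convex_ball (0:ℂ) 1).norm_image_sub_le_of_norm_deriv_le
      (fun x hx => hk.1.differentiableAt (isOpen_ball.mem_nhds hx)) hkb h0mem hz
    calc ‖k z - 1‖ = ‖k z - k 0‖ := by rw [hk0]
      _ ≤ lam * ‖z - 0‖ := this
      _ = lam * ‖z‖ := by rw [sub_zero]
  -- bound on f z - z
  have hfz : ∀ z ∈ ball (0:ℂ) 1, ‖f z - z‖ ≤ lam * ‖z‖ ^ 2 := by
    intro z hz
    rcases eq_or_ne z 0 with rfl | hz0
    · simp [hf0]
    · have h1 : f z - z = z * (k z - 1) := by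
        rw [hk_eq z hz0]; field_simp
      rw [h1, norm_mul]
      calc ‖z‖ * ‖k z - 1‖ ≤ ‖z‖ * (lam * ‖z‖) := by
            exact mul_le_mul_of_nonneg_left (hkey z hz) (norm_nonneg z)
        _ = lam * ‖z‖ ^ 2 := by ring
  -- bound on deriv f z - 1
  have hdfz : ∀ z ∈ ball (0:ℂ) 1, ‖deriv f z - 1‖ ≤ 2 * lam * ‖z‖ := by
    intro z hz
    rcases eq_or_ne z 0 with rfl | hz0
    · simp [hf1]
    · have hwpos : (0:ℝ) < ‖z‖ := norm_pos_iff.2 hz0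
      have h1 : deriv f z - 1 = (g z + (f z - z)) / z := by
        rw [hgdef]; field_simp; ring
      rw [h1, norm_div, div_le_iff₀ hwpos]
      calc ‖g z + (f z - z)‖ ≤ ‖g z‖ + ‖f z - z‖ := norm_add_le _ _
        _ ≤ lam * ‖z‖ ^ 2 + lam * ‖z‖ ^ 2 := add_le_add (hgb z hz) (hfz z hz)
        _ = 2 * lam * ‖z‖ * ‖z‖ := by ring
  -- conclude
  intro z hz
  have h1 := hfz z hz
  have h2 := hdfz z hz
  refine ⟨⟨?_, ?_⟩, ?_, ?_⟩
  · have := norm_sub_norm_le z (z - f z)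
    simp only [sub_sub_cancel] at this
    have h3 : ‖z - f z‖ = ‖f z - z‖ := norm_sub_rev _ _
    linarith [this, h3 ▸ h1]
  · calc ‖f z‖ = ‖z + (f z - z)‖ := by ring_nf
      _ ≤ ‖z‖ + ‖f z - z‖ := norm_add_le _ _
      _ ≤ ‖z‖ + lam * ‖z‖ ^ 2 := by linarith
  · have := norm_sub_norm_le (1:ℂ) (1 - deriv f z)
    simp only [sub_sub_cancel] at this
    have h3 : ‖(1:ℂ) - deriv f z‖ = ‖deriv f z - 1‖ := norm_sub_rev _ _
    have h4 : ‖(1:ℂ)‖ = 1 := by simp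
    rw [h4, h3] at this
    linarith
  · calc ‖deriv f z‖ = ‖(1:ℂ) + (deriv f z - 1)‖ := by ring_nf
      _ ≤ ‖(1:ℂ)‖ + ‖deriv f z - 1‖ := norm_add_le _ _
      _ ≤ 1 + 2 * lam * ‖z‖ := by simp only [norm_one]; linarith
end
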